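/- arXiv:2303.15285 — 2 statements merged into one kernel-verified Lean document; each statement's English description precedes it below -/
import Mathlib

section
/- If every recursively enumerable subset of ℕ is weakly representable in a consistent recursively enumerable theory T, then the set of theorems of T is creative; equivalently, every c.e. set many-one reduces to the set of (Gödel numbers of) theorems of T. -/
open FirstOrder Language

/-- The numeral `n̄ = Sⁿ0` built from a constant `z` and a unary function `s`. -/
def numeral {L : Language} (z : L.Constants) (s : L.Functions 1) : ℕ → L.Term Empty
  | 0 => z.term
  | n + 1 => s.apply₁ (numeral z s n)

theorem manyOneReducible_theoremCodes_of_weaklyRepresents {L : Language}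
    {z : L.Constants} {s : L.Functions 1} {T : L.Theory}
    {efml : L.Formula (Fin 1) → ℕ} {esent : L.Sentence → ℕ} (hesent : Function.Injective esent)
    {sub : ℕ → ℕ → ℕ} (hsubc : Computable₂ sub)
    (hsub : ∀ (φ : L.Formula (Fin 1)) (n : ℕ),
      sub (efml φ) n = esent (φ.subst fun _ => numeral z s n))
    {A : Set ℕ} {φ : L.Formula (Fin 1)}
    (hφ : ∀ n : ℕ, n ∈ A ↔ T ⊨ᵇ (φ.subst fun _ => numeral z s n)) :
    (· ∈ A) ≤₀ (· ∈ esent '' {ψ | T ⊨ᵇ ψ}) :=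
  ⟨sub (efml φ), hsubc.comp (Computable.const _) Computable.id, fun n => by
    show n ∈ A ↔ sub (efml φ) n ∈ _
    rw [hφ n, hsub, hesent.mem_set_image]; rfl⟩

theorem rew_implies_theorems_creative_general {L : Language}
    (z : L.Constants) (s : L.Functions 1) (T : L.Theory)
    (efml : L.Formula (Fin 1) → ℕ) (esent : L.Sentence → ℕ)
    (hesent : Function.Injective esent)
    -- substitution of numerals is computable on codes:
    (sub : ℕ → ℕ → ℕ) (hsubc : Computable₂ sub)
    (hsub : ∀ (φ : L.Formula (Fin 1)) (n : ℕ),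
      sub (efml φ) n = esent (φ.subst fun _ => numeral z s n))
    -- the set of Gödel numbers of theorems of T:
    (TP : Set ℕ) (hTP : TP = {m | ∃ ψ : L.Sentence, esent ψ = m ∧ T ⊨ᵇ ψ})
    -- T is recursively enumerable:
    (hTPre : REPred (· ∈ TP))
    -- every r.e. set is weakly representable in T:
    (hREW : ∀ A : Set ℕ, REPred (· ∈ A) →
      ∃ φ : L.Formula (Fin 1),
        ∀ n : ℕ, n ∈ A ↔ T ⊨ᵇ (φ.subst fun _ => numeral z s n)) :
    REPred (· ∈ TP) ∧
      ∀ B : Set ℕ, REPred (· ∈ B) →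
        ∃ f : ℕ → ℕ, Computable f ∧ ∀ n, n ∈ B ↔ f n ∈ TP := by
  have hTP_image : TP = esent '' {ψ | T ⊨ᵇ ψ} := by
    rw [hTP]; ext m; simp only [Set.mem_ofPred_eq, Set.mem_image, and_comm]
  refine ⟨hTPre, fun B hB => ?_⟩
  obtain ⟨φ, hφ⟩ := hREW B hB
  rw [hTP_image]
  exact manyOneReducible_theoremCodes_of_weaklyRepresents hesent hsubc hsub hφ

/-- If every r.e. set is weakly representable in a consistent r.e. theory `T`,
then the set of theorem-codes of `T` is creative: it is c.e. and every c.e. set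
many-one reduces to it. -/
theorem rew_implies_theorems_creative {L : Language}
    (z : L.Constants) (s : L.Functions 1) (T : L.Theory)
    (hcon : T.IsSatisfiable)
    (efml : L.Formula (Fin 1) → ℕ) (esent : L.Sentence → ℕ)
    (hesent : Function.Injective esent)
    -- substitution of numerals is computable on codes:
    (sub : ℕ → ℕ → ℕ) (hsubc : Computable₂ sub)
    (hsub : ∀ (φ : L.Formula (Fin 1)) (n : ℕ),
      sub (efml φ) n = esent (φ.subst fun _ => numeral z s n))
    -- the set of Gödel numbers of theorems of T:
    (TP : Set ℕ) (hTP : TP = {m | ∃ ψ : L.Sentence, esent ψ = m ∧ T ⊨ᵇ ψ})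
    -- T is recursively enumerable:
    (hTPre : REPred (· ∈ TP))
    -- every r.e. set is weakly representable in T:
    (hREW : ∀ A : Set ℕ, REPred (· ∈ A) →
      ∃ φ : L.Formula (Fin 1),
        ∀ n : ℕ, n ∈ A ↔ T ⊨ᵇ (φ.subst fun _ => numeral z s n)) :
    REPred (· ∈ TP) ∧
      ∀ B : Set ℕ, REPred (· ∈ B) →
        ∃ f : ℕ → ℕ, Computable f ∧ ∀ n, n ∈ B ↔ f n ∈ TP :=
  rew_implies_theorems_creative_general z s T efml esent hesent sub hsubc hsub TP hTP hTPre hREW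
end

section
/- If a consistent recursively enumerable theory T strongly represents every computable subset of ℕ, then the pair (T_P, T_R) of theorem-codes and refutable-sentence-codes of T is recursively inseparable: no computable set X satisfies T_P ⊆ X and X ∩ T_R = ∅. -/
/-!
A computable separator `X` of theorems from refutable sentences would be universal for the
computable sets: if `φ` strongly represents `Y`, then `n ∈ Y ↔ ⌜φ(n̄)⌝ ∈ X`. But no computable
set is universal, since the diagonal set `{n | sub n n ∉ X}` is computable and cannot occur
as a row `{n | sub e n ∈ X}` (take `n = e`).
-/

open FirstOrder Language

theorem ComputablePred.diagonal_notMem {X : Set ℕ} {sub : ℕ → ℕ → ℕ}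
    (hX : ComputablePred (· ∈ X)) (hsub : Computable₂ sub) :
    ComputablePred fun n => sub n n ∉ X :=
  (ComputablePred.computable_of_manyOneReducible
    ⟨fun n => sub n n, hsub.comp .id .id, fun _ => Iff.rfl⟩ hX).not

theorem ComputablePred.not_universal {X : Set ℕ} {sub : ℕ → ℕ → ℕ}
    (hX : ComputablePred (· ∈ X)) (hsub : Computable₂ sub) :
    ¬ ∀ Y : Set ℕ, ComputablePred (· ∈ Y) → ∃ e, ∀ n, n ∈ Y ↔ sub e n ∈ X := by
  intro huniv
  obtain ⟨e, he⟩ := huniv {n | sub n n ∉ X} (hX.diagonal_notMem hsub)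
  exact not_iff_self (he e)

theorem Set.mem_iff_of_separates {α β : Type*} {P R X : Set β} {Y : Set α} {f : α → β}
    (hPX : P ⊆ X) (hXR : X ∩ R = ∅) (hYP : ∀ a ∈ Y, f a ∈ P) (hYR : ∀ a ∉ Y, f a ∈ R)
    (a : α) : a ∈ Y ↔ f a ∈ X := by
  refine ⟨fun ha => hPX (hYP a ha), fun hX => by_contra fun ha => ?_⟩
  exact hXR.subset ⟨hX, hYR a ha⟩

theorem rss_implies_nuclei_recursively_inseparable_general {L : Language}
    (z : L.Constants) (s : L.Functions 1) (T : L.Theory)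
    (efml : L.Formula (Fin 1) → ℕ) (esent : L.Sentence → ℕ)
    -- substitution of numerals is computable on codes:
    (sub : ℕ → ℕ → ℕ) (hsubc : Computable₂ sub)
    (hsub : ∀ (φ : L.Formula (Fin 1)) (n : ℕ),
      sub (efml φ) n = esent (φ.subst fun _ => numeral z s n))
    -- every computable set is strongly representable in T:
    (hRSS : ∀ Y : Set ℕ, ComputablePred (· ∈ Y) →
      ∃ φ : L.Formula (Fin 1),
        (∀ n ∈ Y, T ⊨ᵇ (φ.subst fun _ => numeral z s n)) ∧
        (∀ n ∉ Y, T ⊨ᵇ BoundedFormula.not (φ.subst fun _ => numeral z s n))) :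
    ¬ ∃ X : Set ℕ, ComputablePred (· ∈ X) ∧
        {m | ∃ ψ : L.Sentence, esent ψ = m ∧ T ⊨ᵇ ψ} ⊆ X ∧
        X ∩ {m | ∃ ψ : L.Sentence, esent ψ = m ∧ T ⊨ᵇ BoundedFormula.not ψ} = ∅ := by
  rintro ⟨X, hX, hPX, hXR⟩
  refine hX.not_universal hsubc fun Y hY => ?_
  obtain ⟨φ, hYP, hYR⟩ := hRSS Y hY
  exact ⟨efml φ, Set.mem_iff_of_separates hPX hXR
    (fun n hn => ⟨_, (hsub φ n).symm, hYP n hn⟩) (fun n hn => ⟨_, (hsub φ n).symm, hYR n hn⟩)⟩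

/-- If a consistent r.e. theory `T` strongly represents every computable subset
of ℕ, then the nuclei pair `(T_P, T_R)` of theorem-codes and
refutable-sentence-codes is recursively inseparable. -/
theorem rss_implies_nuclei_recursively_inseparable {L : Language}
    (z : L.Constants) (s : L.Functions 1) (T : L.Theory)
    (hcon : T.IsSatisfiable)
    (efml : L.Formula (Fin 1) → ℕ) (esent : L.Sentence → ℕ)
    (hesent : Function.Injective esent)
    -- substitution of numerals is computable on codes:
    (sub : ℕ → ℕ → ℕ) (hsubc : Computable₂ sub)
    (hsub : ∀ (φ : L.Formula (Fin 1)) (n : ℕ),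
      sub (efml φ) n = esent (φ.subst fun _ => numeral z s n))
    -- negation is computable on codes:
    (negc : ℕ → ℕ) (hnegc : Computable negc)
    (hneg : ∀ ψ : L.Sentence, negc (esent ψ) = esent (BoundedFormula.not ψ))
    -- T is recursively enumerable:
    (hre : REPred fun m => ∃ ψ : L.Sentence, esent ψ = m ∧ T ⊨ᵇ ψ)
    -- every computable set is strongly representable in T:
    (hRSS : ∀ Y : Set ℕ, ComputablePred (· ∈ Y) →
      ∃ φ : L.Formula (Fin 1),
        (∀ n ∈ Y, T ⊨ᵇ (φ.subst fun _ => numeral z s n)) ∧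
        (∀ n ∉ Y, T ⊨ᵇ BoundedFormula.not (φ.subst fun _ => numeral z s n))) :
    ¬ ∃ X : Set ℕ, ComputablePred (· ∈ X) ∧
        {m | ∃ ψ : L.Sentence, esent ψ = m ∧ T ⊨ᵇ ψ} ⊆ X ∧
        X ∩ {m | ∃ ψ : L.Sentence, esent ψ = m ∧ T ⊨ᵇ BoundedFormula.not ψ} = ∅ :=
  rss_implies_nuclei_recursively_inseparable_general z s T efml esent sub hsubc hsub hRSS
end
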